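/- Let M be a matroid on a finite linearly ordered ground set E and let A ⊆ E. Then |P_M(A)| = r(M) − r_M(A), where P_M(A) = {e ∈ E∖A : e = min(C) for some cocircuit C of M with C ⊆ E∖A}. In particular |P_M(A)| does not depend on the linear ordering of E. -/

import Mathlib

/-- A circuit of a matroid: a minimal dependent set. -/
def Matroid.IsCircuit' {α : Type*} (M : Matroid α) (C : Set α) : Prop :=
  M.Dep C ∧ ∀ D, M.Dep D → D ⊆ C → D = C

/-- A cocircuit of a matroid: a circuit of the dual matroid. -/
def Matroid.IsCocircuit' {α : Type*} (M : Matroid α) (C : Set α) : Prop :=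
  M✶.IsCircuit' C

/-- The rank of a set in a matroid: the largest cardinality of an independent subset. -/
noncomputable def Matroid.rk' {α : Type*} (M : Matroid α) (A : Set α) : ℕ :=
  sSup {n : ℕ | ∃ I, I ⊆ A ∧ M.Indep I ∧ I.ncard = n}

/-- `e` is the minimum element of the set `C`. -/
def IsMinOf {α : Type*} [LinearOrder α] (C : Set α) (e : α) : Prop :=
  e ∈ C ∧ ∀ x ∈ C, e ≤ x

/-- `Int_M(A)`: internally active elements of `A` w.r.t. `M`
(the ground set is the whole type, so `E ∖ A = Aᶜ`). -/
def IntSet {α : Type*} [LinearOrder α] (M : Matroid α) (A : Set α) : Set α :=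
  {e | e ∈ A ∧ ∃ C, M.IsCocircuit' C ∧ C ⊆ Aᶜ ∪ {e} ∧ IsMinOf C e}

/-- `Ext_M(A)`: externally active elements w.r.t. `M`. -/
def ExtSet {α : Type*} [LinearOrder α] (M : Matroid α) (A : Set α) : Set α :=
  {e | e ∉ A ∧ ∃ C, M.IsCircuit' C ∧ C ⊆ A ∪ {e} ∧ IsMinOf C e}

/-- `P_M(A)`: smallest elements of cocircuits of `M` contained in `E ∖ A`. -/
def PActSet {α : Type*} [LinearOrder α] (M : Matroid α) (A : Set α) : Set α :=
  {e | e ∉ A ∧ ∃ C, M.IsCocircuit' C ∧ C ⊆ Aᶜ ∧ IsMinOf C e}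

/-- `Q_M(A)`: smallest elements of circuits of `M` contained in `A`. -/
def QActSet {α : Type*} [LinearOrder α] (M : Matroid α) (A : Set α) : Set α :=
  {e | e ∈ A ∧ ∃ C, M.IsCircuit' C ∧ C ⊆ A ∧ IsMinOf C e}

/-!
An element `e` lies in `P_M(A)` exactly when some cocircuit through `e` avoids `A ∪ {x | x < e}`,
and a cocircuit through `e` avoids a set `X` iff `e ∉ cl X` (complements of cocircuits are the
hyperplanes). So `P_M(A) = {e | e ∉ cl (A ∪ {x | x < e})}` is the set of elements at which
`r_M (A ∪ {x | x ≤ e})` increases as `e` runs through `E` in order, whence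
`|P_M(A)| = r(M) - r_M(A)`.
-/

open Set

namespace Matroid

variable {α : Type*} {M : Matroid α} {A C I X : Set α} {e : α}

lemma isCircuit'_iff : M.IsCircuit' C ↔ M.IsCircuit C :=
  ⟨fun ⟨hC, hmin⟩ ↦ ⟨hC, fun D hD hDC ↦ (hmin D hD hDC).ge⟩,
    fun hC ↦ ⟨hC.dep, fun _ hD hDC ↦ hDC.antisymm (hC.2 hD hDC)⟩⟩

lemma isCocircuit'_iff : M.IsCocircuit' C ↔ M.IsCocircuit C :=
  isCircuit'_iff

lemma exists_isCocircuit_mem_disjoint_iff :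
    (∃ K, M.IsCocircuit K ∧ e ∈ K ∧ Disjoint K X) ↔ e ∈ M.E \ M.closure X := by
  constructor
  · rintro ⟨K, hK, heK, hKX⟩
    refine ⟨hK.subset_ground heK, fun hecl ↦ ?_⟩
    obtain ⟨C, hCX, hC, heC⟩ := exists_isCircuit_of_mem_closure hecl (hKX.notMem_of_mem_left heK)
    refine hC.inter_isCocircuit_ne_singleton hK (e := e) <|
      subset_antisymm (fun f ⟨hfC, hfK⟩ ↦ ?_) (singleton_subset_iff.2 ⟨heC, heK⟩)
    obtain rfl | hfX := hCX hfC
    · rfl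
    · exact absurd hfX (hKX.notMem_of_mem_left hfK)
  · rintro ⟨heE, hecl⟩
    obtain ⟨I, hI⟩ := M.exists_isBasis' X
    rw [← hI.closure_eq_closure] at hecl
    obtain ⟨B, hB, hIB⟩ :=
      (hI.indep.insert_indep_iff.2 (.inl ⟨heE, hecl⟩)).exists_isBase_superset
    have heB : e ∈ B := hIB (mem_insert e I)
    have hIB' : I ⊆ B \ {e} := fun x hx ↦ ⟨hIB (mem_insert_of_mem e hx),
      by rintro rfl; exact hecl (M.subset_closure I hI.indep.subset_ground hx)⟩
    refine ⟨M.E \ M.closure (B \ {e}), hB.compl_closure_sdiff_singleton_isCocircuit heB,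
      ⟨heE, hB.indep.notMem_closure_sdiff_of_mem heB⟩,
      disjoint_left.2 fun f ⟨hfE, hfB⟩ hfX ↦ hfB ?_⟩
    exact M.closure_subset_closure hIB' <|
      hI.closure_eq_closure ▸ M.inter_ground_subset_closure X ⟨hfX, hfE⟩

lemma eRk_insert_eq_of_notMem_sdiff_closure (he : e ∉ M.E \ M.closure X) :
    M.eRk (insert e X) = M.eRk X := by
  by_cases heE : e ∈ M.E
  · rw [← eRk_insert_closure_eq, insert_eq_of_mem (by simpa [heE] using he), eRk_closure_eq]
  · exact M.eRk_insert_of_notMem_ground X heE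

lemma IsBasis'.rk'_eq_ncard [Finite α] (hI : M.IsBasis' I X) : M.rk' X = I.ncard := by
  refine IsGreatest.csSup_eq ⟨⟨I, hI.subset, hI.indep, rfl⟩, ?_⟩
  rintro _ ⟨J, hJX, hJ, rfl⟩
  have hJI : J.encard ≤ I.encard := hI.encard_eq_eRk ▸ hJ.encard_le_eRk_of_subset hJX
  rwa [← (toFinite J).cast_ncard_eq, ← (toFinite I).cast_ncard_eq, Nat.cast_le] at hJI

lemma cast_rk' [Finite α] (M : Matroid α) (X : Set α) : (M.rk' X : ℕ∞) = M.eRk X := by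
  obtain ⟨I, hI⟩ := M.exists_isBasis' X
  rw [hI.rk'_eq_ncard, (toFinite I).cast_ncard_eq, hI.encard_eq_eRk]

section LinearOrder

variable [LinearOrder α]

lemma mem_pActSet_iff : e ∈ PActSet M A ↔ e ∈ M.E \ M.closure (A ∪ Iio e) := by
  rw [← exists_isCocircuit_mem_disjoint_iff, PActSet, mem_ofPred_eq]
  simp only [isCocircuit'_iff, IsMinOf, disjoint_union_right, subset_compl_iff_disjoint_right,
    disjoint_left (t := Iio e), mem_Iio, not_lt]
  constructor
  · rintro ⟨-, K, hK, hKA, heK, hmin⟩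
    exact ⟨K, hK, heK, hKA, hmin⟩
  · rintro ⟨K, hK, heK, hKA, hmin⟩
    exact ⟨hKA.notMem_of_mem_left heK, K, hK, hKA, heK, hmin⟩

lemma eRk_union_eq_add_encard_of_isLowerSet (M : Matroid α) (A : Set α) {s : Finset α}
    (hs : IsLowerSet (s : Set α)) :
    M.eRk (A ∪ s) = M.eRk A + ((s : Set α) ∩ {x | x ∈ M.E \ M.closure (A ∪ Iio x)}).encard := by
  classical
  set P := {x | x ∈ M.E \ M.closure (A ∪ Iio x)}
  induction s using Finset.induction_on_max with
  | empty => simp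
  | insert a s has ih =>
    have hIio : Iio a = s := by
      ext x
      refine ⟨fun hx ↦ ?_, has x⟩
      obtain rfl | hxs := Finset.mem_insert.1 (hs hx.le (by simp))
      · exact (lt_irrefl x hx).elim
      · exact hxs
    have ih' := ih (hIio ▸ isLowerSet_Iio a)
    rw [← hIio] at ih'
    rw [Finset.coe_insert, union_insert, ← hIio]
    by_cases ha : a ∈ P
    · rw [eRk_insert_eq_add_one ha, ih', insert_inter_of_mem ha,
        encard_insert_of_notMem (fun h ↦ lt_irrefl a h.1), add_assoc]
    · rw [eRk_insert_eq_of_notMem_sdiff_closure ha, ih', insert_inter_of_notMem ha]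

end LinearOrder

end Matroid

theorem stmt12_general {α : Type*} [Fintype α] [LinearOrder α] (M : Matroid α)
    (A : Set α) :
    (PActSet M A).ncard = M.rk' Set.univ - M.rk' A := by
  have hP : PActSet M A = {x | x ∈ M.E \ M.closure (A ∪ Iio x)} :=
    ext fun _ ↦ Matroid.mem_pActSet_iff
  have h := M.eRk_union_eq_add_encard_of_isLowerSet A (s := Finset.univ)
    (by simpa using isLowerSet_univ)
  rw [Finset.coe_univ, union_univ, univ_inter, ← hP, ← (toFinite _).cast_ncard_eq,
    ← M.cast_rk', ← M.cast_rk'] at h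
  norm_cast at h
  omega

/-- `|P_M(A)| = r(M) − r_M(A)`; in particular it does not depend on the linear order. -/
theorem stmt12 {α : Type*} [Fintype α] [LinearOrder α] (M : Matroid α)
    (hME : M.E = Set.univ) (A : Set α) :
    (PActSet M A).ncard = M.rk' Set.univ - M.rk' A :=
  stmt12_general M A
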